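/- Let n and p be positive integers and let A be a finite set of integers consisting of exactly n negative integers, exactly p positive integers, and 0. If α is an integer with 0 ≤ α ≤ n + p + 1, α > n, and α > p, then |Σ_α(A)| ≥ n(n+1)/2 + p(p+1)/2 − (α−n)(α−n−1)/2 − (α−p)(α−p−1)/2 + 1. -/

import Mathlib

/-!
Let `N` and `P` be the negative and positive parts of `A`, write `s(X)` for the sum of `X`, and put
`κ = α - n - 1`, `λ = α - p - 1`. The sets `N ∪ {0} ∪ S` with `S ⊆ P`, `|S| ≥ κ`, have sums in
`s(N) + Σ_κ(P)`, all at most `s(N) + s(P)`; the sets `P ∪ {0} ∪ T` with `T ⊆ N`, `|T| ≥ λ`, have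
sums in `s(P) + Σ_λ(N)`, all at least `s(N) + s(P)`. So the two families share at most one sum,
and it remains to bound `|Σ_κ(C)|` from below for a set `C` of positive integers (then apply it
to `P` and `-N`). Adding a new maximum `a` to `C` creates the `|C| + 1` new sums `a + s(C) - x`,
`x ∈ C ∪ {0}`, all exceeding every element of `Σ_κ(C)`; by induction,
`|Σ_κ(C)| ≥ C(|C| + 1, 2) - C(κ + 1, 2) + 1`.
-/

/-- `sigmaAtLeast A α` is the set of all subset sums of `A` coming from
subsets of size at least `α`. -/
def sigmaAtLeast (A : Finset ℤ) (α : ℕ) : Finset ℤ :=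
  (A.powerset.filter (fun B => α ≤ B.card)).image (fun B => B.sum id)

open Finset Pointwise

lemma mem_sigmaAtLeast {A : Finset ℤ} {α : ℕ} {x : ℤ} :
    x ∈ sigmaAtLeast A α ↔ ∃ B ⊆ A, α ≤ #B ∧ ∑ b ∈ B, b = x := by
  simp only [sigmaAtLeast, mem_image, mem_filter, mem_powerset, id]
  aesop

lemma sum_mem_sigmaAtLeast {A : Finset ℤ} {α : ℕ} (h : α ≤ #A) :
    ∑ a ∈ A, a ∈ sigmaAtLeast A α :=
  mem_sigmaAtLeast.2 ⟨A, Subset.rfl, h, rfl⟩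

lemma card_sigmaAtLeast_pos {A : Finset ℤ} {α : ℕ} (h : α ≤ #A) :
    0 < #(sigmaAtLeast A α) :=
  card_pos.2 ⟨_, sum_mem_sigmaAtLeast h⟩

lemma sigmaAtLeast_mono {A B : Finset ℤ} {α : ℕ} (h : A ⊆ B) :
    sigmaAtLeast A α ⊆ sigmaAtLeast B α := by
  intro x hx
  obtain ⟨S, hS, hcard, rfl⟩ := mem_sigmaAtLeast.1 hx
  exact mem_sigmaAtLeast.2 ⟨S, hS.trans h, hcard, rfl⟩

lemma le_sum_of_mem_sigmaAtLeast {A : Finset ℤ} (hA : ∀ a ∈ A, 0 ≤ a) {α : ℕ} {x : ℤ}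
    (hx : x ∈ sigmaAtLeast A α) : x ≤ ∑ a ∈ A, a := by
  obtain ⟨B, hB, -, rfl⟩ := mem_sigmaAtLeast.1 hx
  exact sum_le_sum_of_subset_of_nonneg hB fun a ha _ ↦ hA a ha

lemma sum_le_of_mem_sigmaAtLeast {A : Finset ℤ} (hA : ∀ a ∈ A, a ≤ 0) {α : ℕ} {x : ℤ}
    (hx : x ∈ sigmaAtLeast A α) : ∑ a ∈ A, a ≤ x := by
  obtain ⟨B, hB, -, rfl⟩ := mem_sigmaAtLeast.1 hx
  rw [← sum_sdiff hB]
  have : ∑ a ∈ A \ B, a ≤ 0 := sum_nonpos fun a ha ↦ hA a (mem_sdiff.1 ha).1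
  linarith

lemma neg_mem_sigmaAtLeast_neg {A : Finset ℤ} {α : ℕ} {x : ℤ} (hx : x ∈ sigmaAtLeast A α) :
    -x ∈ sigmaAtLeast (-A) α := by
  obtain ⟨B, hB, hcard, rfl⟩ := mem_sigmaAtLeast.1 hx
  refine mem_sigmaAtLeast.2 ⟨-B, neg_subset_neg hB, (card_neg B).symm ▸ hcard, ?_⟩
  rw [← image_neg_eq_neg, sum_image neg_injective.injOn, sum_neg_distrib]

lemma sigmaAtLeast_neg (A : Finset ℤ) (α : ℕ) : sigmaAtLeast (-A) α = -sigmaAtLeast A α := by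
  ext x
  rw [← image_neg_eq_neg (sigmaAtLeast A α), mem_image]
  constructor
  · intro hx
    exact ⟨-x, by simpa using neg_mem_sigmaAtLeast_neg hx, neg_neg x⟩
  · rintro ⟨y, hy, rfl⟩
    exact neg_mem_sigmaAtLeast_neg hy

lemma card_sigmaAtLeast_neg (A : Finset ℤ) (α : ℕ) :
    #(sigmaAtLeast (-A) α) = #(sigmaAtLeast A α) := by
  rw [sigmaAtLeast_neg, card_neg]

lemma card_add_card_sigmaAtLeast_le_insert {s : Finset ℤ} {a : ℤ} {κ : ℕ}
    (hs : ∀ x ∈ s, 0 < x) (hsa : ∀ x ∈ s, x < a) (ha : 0 < a) (hκ : κ ≤ #s) :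
    #s + 1 + #(sigmaAtLeast s κ) ≤ #(sigmaAtLeast (insert a s) κ) := by
  have ha_notMem : a ∉ s := fun h ↦ (hsa a h).false
  have h0_notMem : (0 : ℤ) ∉ s := fun h ↦ (hs 0 h).false
  have hsum : ∑ x ∈ insert a s, x = a + ∑ x ∈ s, x := sum_insert ha_notMem
  set new := (insert 0 s).image (∑ x ∈ insert a s, x - ·)
  have hnew_card : #new = #s + 1 := by
    rw [card_image_of_injective _ sub_right_injective, card_insert_of_notMem h0_notMem]
  have hnew_sub : new ⊆ sigmaAtLeast (insert a s) κ := by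
    simp only [new, image_subset_iff, mem_insert, forall_eq_or_imp, sub_zero]
    refine ⟨sum_mem_sigmaAtLeast (by rw [card_insert_of_notMem ha_notMem]; omega),
      fun x hx ↦ mem_sigmaAtLeast.2 ⟨(insert a s).erase x, erase_subset _ _, ?_, ?_⟩⟩
    · rw [card_erase_of_mem (mem_insert_of_mem hx), card_insert_of_notMem ha_notMem]; omega
    · exact sum_erase_eq_sub (mem_insert_of_mem hx)
  have hnew_gt : ∀ y ∈ new, ∑ x ∈ s, x < y := by
    simp only [new, forall_mem_image, mem_insert, forall_eq_or_imp, hsum]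
    exact ⟨by linarith, fun x hx ↦ by linarith [hsa x hx]⟩
  have hdisj : Disjoint new (sigmaAtLeast s κ) :=
    disjoint_left.2 fun y hy hy' ↦ (hnew_gt y hy).not_ge
      (le_sum_of_mem_sigmaAtLeast (fun x hx ↦ (hs x hx).le) hy')
  calc #s + 1 + #(sigmaAtLeast s κ) = #(new ∪ sigmaAtLeast s κ) := by
        rw [card_union_of_disjoint hdisj, hnew_card]
    _ ≤ #(sigmaAtLeast (insert a s) κ) :=
        card_le_card (union_subset hnew_sub (sigmaAtLeast_mono (subset_insert a s)))

lemma le_card_sigmaAtLeast_of_pos (C : Finset ℤ) (hC : ∀ x ∈ C, 0 < x) {κ : ℕ} (hκ : κ ≤ #C) :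
    (#C + 1).choose 2 + 1 ≤ #(sigmaAtLeast C κ) + (κ + 1).choose 2 := by
  induction C using induction_on_max generalizing κ with
  | empty =>
    have := card_sigmaAtLeast_pos hκ
    rw [card_empty, Nat.le_zero] at hκ
    rw [card_empty]
    subst hκ
    omega
  | insert a s hsa ih =>
    have ha_notMem : a ∉ s := fun h ↦ (hsa a h).false
    rw [card_insert_of_notMem ha_notMem] at hκ ⊢
    rcases hκ.eq_or_lt with rfl | hκ
    · have := card_sigmaAtLeast_pos (card_insert_of_notMem ha_notMem).ge
      omega
    · have hs : ∀ x ∈ s, 0 < x := fun x hx ↦ hC x (mem_insert_of_mem hx)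
      have hstep := card_add_card_sigmaAtLeast_le_insert hs hsa (hC a (mem_insert_self a s))
        (Nat.le_of_lt_succ hκ)
      have hchoose : (#s + 1 + 1).choose 2 = (#s + 1).choose 2 + (#s + 1) := by
        rw [Nat.choose_succ_succ', Nat.choose_one_right, add_comm]
      have := ih hs (Nat.le_of_lt_succ hκ)
      omega

lemma card_add_card_le_card_union_add_one {ι : Type*} [DecidableEq ι] [PartialOrder ι]
    {X Y : Finset ι} {m : ι}
    (hX : ∀ x ∈ X, x ≤ m) (hY : ∀ y ∈ Y, m ≤ y) : #X + #Y ≤ #(X ∪ Y) + 1 := by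
  have hinter : X ∩ Y ⊆ {m} := fun z hz ↦ by
    rw [mem_inter] at hz
    exact mem_singleton.2 (le_antisymm (hX z hz.1) (hY z hz.2))
  have := card_le_card hinter
  rw [card_singleton] at this
  rw [← card_union_add_card_inter]
  omega

lemma image_sum_add_subset_sigmaAtLeast {A B C : Finset ℤ} {α κ : ℕ} (hB : B ⊆ A) (hC : C ⊆ A)
    (hBC : Disjoint B C) (hα : α ≤ #B + κ) :
    (sigmaAtLeast C κ).image (∑ b ∈ B, b + ·) ⊆ sigmaAtLeast A α := by
  simp only [image_subset_iff]
  intro x hx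
  obtain ⟨S, hS, hcard, rfl⟩ := mem_sigmaAtLeast.1 hx
  have hBS : Disjoint B S := hBC.mono_right hS
  refine mem_sigmaAtLeast.2 ⟨B ∪ S, union_subset hB (hS.trans hC), ?_, sum_union hBS⟩
  rw [card_union_of_disjoint hBS]
  omega

lemma card_sigmaAtLeast_add_card_sigmaAtLeast_le {A N P : Finset ℤ} (h0 : (0 : ℤ) ∈ A)
    (hNA : N ⊆ A) (hPA : P ⊆ A) (hN : ∀ x ∈ N, x < 0) (hP : ∀ x ∈ P, 0 < x)
    {α κ μ : ℕ} (hκ : α ≤ #N + 1 + κ) (hμ : α ≤ #P + 1 + μ) :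
    #(sigmaAtLeast P κ) + #(sigmaAtLeast N μ) ≤ #(sigmaAtLeast A α) + 1 := by
  have hNP : Disjoint N P := disjoint_left.2 fun x hxN hxP ↦ (hN x hxN).not_gt (hP x hxP)
  have h0N : (0 : ℤ) ∉ N := fun h ↦ (hN 0 h).false
  have h0P : (0 : ℤ) ∉ P := fun h ↦ (hP 0 h).false
  have hsub₁ := image_sum_add_subset_sigmaAtLeast (insert_subset h0 hNA) hPA
    (disjoint_insert_left.2 ⟨h0P, hNP⟩) (α := α) (κ := κ) (by rwa [card_insert_of_notMem h0N])
  have hsub₂ := image_sum_add_subset_sigmaAtLeast (insert_subset h0 hPA) hNA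
    (disjoint_insert_left.2 ⟨h0N, hNP.symm⟩) (α := α) (κ := μ) (by rwa [card_insert_of_notMem h0P])
  rw [sum_insert h0N, zero_add] at hsub₁
  rw [sum_insert h0P, zero_add] at hsub₂
  have hle := card_add_card_le_card_union_add_one (m := ∑ x ∈ N, x + ∑ x ∈ P, x)
    (X := (sigmaAtLeast P κ).image (∑ x ∈ N, x + ·))
    (Y := (sigmaAtLeast N μ).image (∑ x ∈ P, x + ·))
    (by
      simp only [forall_mem_image, add_le_add_iff_left]
      exact fun x hx ↦ le_sum_of_mem_sigmaAtLeast (fun x hx ↦ (hP x hx).le) hx)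
    (by
      simp only [forall_mem_image]
      exact fun x hx ↦ by
        linarith [sum_le_of_mem_sigmaAtLeast (fun x hx ↦ (hN x hx).le) hx])
  rw [card_image_of_injective _ (add_right_injective _),
    card_image_of_injective _ (add_right_injective _)] at hle
  have := card_le_card (union_subset hsub₁ hsub₂)
  omega

lemma Int.natCast_mul_add_one_div_two (m : ℕ) : (m : ℤ) * (m + 1) / 2 = (m + 1).choose 2 := by
  refine Int.ediv_eq_of_eq_mul_left two_ne_zero ?_
  have h := Nat.add_one_mul_choose_eq m 1
  rw [Nat.choose_one_right] at h
  rw [mul_comm]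
  exact_mod_cast h

theorem stmt_10_general (n p α : ℕ) (A : Finset ℤ)
    (hneg : (A.filter (fun x => x < 0)).card = n)
    (hpos : (A.filter (fun x => 0 < x)).card = p)
    (h0 : (0 : ℤ) ∈ A)
    (hα : α ≤ n + p + 1) (hαn : n < α) (hαp : p < α) :
    ((sigmaAtLeast A α).card : ℤ) ≥
      (n : ℤ) * ((n : ℤ) + 1) / 2 + (p : ℤ) * ((p : ℤ) + 1) / 2
        - ((α : ℤ) - (n : ℤ)) * ((α : ℤ) - (n : ℤ) - 1) / 2
        - ((α : ℤ) - (p : ℤ)) * ((α : ℤ) - (p : ℤ) - 1) / 2 + 1 := by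
  set N := A.filter (fun x => x < 0)
  set P := A.filter (fun x => 0 < x)
  have hNneg : ∀ x ∈ N, x < 0 := fun x hx ↦ (mem_filter.1 hx).2
  have hPpos : ∀ x ∈ P, 0 < x := fun x hx ↦ (mem_filter.1 hx).2
  have hP := le_card_sigmaAtLeast_of_pos P hPpos (κ := α - n - 1) (by omega)
  have hN := le_card_sigmaAtLeast_of_pos (-N) (fun x hx ↦ by simpa using hNneg _ (mem_neg'.1 hx))
    (κ := α - p - 1) (by rw [card_neg]; omega)
  rw [card_neg, card_sigmaAtLeast_neg] at hN
  have hcomb := card_sigmaAtLeast_add_card_sigmaAtLeast_le h0 (filter_subset _ A)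
    (filter_subset _ A) hNneg hPpos (α := α) (N := N) (P := P) (κ := α - n - 1) (μ := α - p - 1)
    (by omega) (by omega)
  have hκ : ((α - n - 1 : ℕ) : ℤ) = α - n - 1 := by omega
  have hμ : ((α - p - 1 : ℕ) : ℤ) = α - p - 1 := by omega
  rw [Int.natCast_mul_add_one_div_two, Int.natCast_mul_add_one_div_two,
    show ((α : ℤ) - n) * (α - n - 1) = (α - n - 1 : ℕ) * ((α - n - 1 : ℕ) + 1) by rw [hκ]; ring,
    show ((α : ℤ) - p) * (α - p - 1) = (α - p - 1 : ℕ) * ((α - p - 1 : ℕ) + 1) by rw [hμ]; ring,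
    Int.natCast_mul_add_one_div_two, Int.natCast_mul_add_one_div_two]
  rw [hpos] at hP
  rw [hneg] at hN
  omega

theorem stmt_10 (n p α : ℕ) (hn : 1 ≤ n) (hp : 1 ≤ p) (A : Finset ℤ)
    (hneg : (A.filter (fun x => x < 0)).card = n)
    (hpos : (A.filter (fun x => 0 < x)).card = p)
    (h0 : (0 : ℤ) ∈ A)
    (hα : α ≤ n + p + 1) (hαn : n < α) (hαp : p < α) :
    ((sigmaAtLeast A α).card : ℤ) ≥
      (n : ℤ) * ((n : ℤ) + 1) / 2 + (p : ℤ) * ((p : ℤ) + 1) / 2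
        - ((α : ℤ) - (n : ℤ)) * ((α : ℤ) - (n : ℤ) - 1) / 2
        - ((α : ℤ) - (p : ℤ)) * ((α : ℤ) - (p : ℤ) - 1) / 2 + 1 :=
  stmt_10_general n p α A hneg hpos h0 hα hαn hαp
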